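/- For every ρ with −1 < ρ ≤ (π−2)/(π+2), set c = √((1+ρ)/(1−ρ)) (so that 0 < c ≤ √(π/2)). Then u = 0 is the unique real solution of the equation 1 − 2·Φ(c·u) + u = 0. -/

import Mathlib

/-!
By the symmetry `Φ(-x) = 1 - Φ(x)` the function `g(u) = 1 - 2Φ(cu) + u` is odd, so it suffices
to show `g(u) > 0` for `u > 0`. The standard normal density is maximal at `0`, where it equals
`1/√(2π)`, so `Φ(cu) - 1/2 < cu/√(2π) ≤ u/2` as soon as `c ≤ √(π/2)`. The constraint
`ρ ≤ (π-2)/(π+2)` is exactly `(1+ρ)/(1-ρ) ≤ π/2`.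
-/

open ProbabilityTheory Real Set

noncomputable def stdNormCDF : ℝ → ℝ := fun x => ProbabilityTheory.cdf (gaussianReal 0 1) x

open MeasureTheory

lemma cdf_neg_of_map_neg_eq {μ : Measure ℝ} [IsProbabilityMeasure μ] [NullSingletonClass μ]
    (hμ : μ.map Neg.neg = μ) (x : ℝ) : cdf μ (-x) = 1 - cdf μ x := by
  have hIci : μ.real (Ici x) = 1 - μ.real (Iic x) := by
    rw [measureReal_congr Ioi_ae_eq_Ici.symm, ← compl_Iic, measureReal_compl measurableSet_Iic,
      probReal_univ]
  rw [cdf_eq_real, cdf_eq_real, ← hIci]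
  conv_lhs => rw [← hμ]
  rw [map_measureReal_apply measurable_neg measurableSet_Iic, neg_preimage, neg_Iic, neg_neg]

lemma cdf_gaussianReal_neg {v : NNReal} (hv : v ≠ 0) (x : ℝ) :
    cdf (gaussianReal 0 v) (-x) = 1 - cdf (gaussianReal 0 v) x := by
  have := nullSingletonClass_gaussianReal (μ := 0) hv
  exact cdf_neg_of_map_neg_eq (by rw [gaussianReal_map_neg, neg_zero]) x

lemma gaussianPDFReal_lt_gaussianPDFReal_self {μ : ℝ} {v : NNReal} (hv : v ≠ 0) {t : ℝ}
    (ht : t ≠ μ) : gaussianPDFReal μ v t < gaussianPDFReal μ v μ := by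
  have hv' : (0 : ℝ) < v := by positivity
  have ht' : 0 < (t - μ) ^ 2 / (2 * v) := by positivity [sub_ne_zero.2 ht]
  rw [gaussianPDFReal, gaussianPDFReal, sub_self]
  refine mul_lt_mul_of_pos_left (exp_lt_exp.2 ?_) (by positivity)
  simpa [neg_div] using ht'

lemma gaussianPDFReal_le_gaussianPDFReal_self (μ : ℝ) (v : NNReal) (t : ℝ) :
    gaussianPDFReal μ v t ≤ gaussianPDFReal μ v μ := by
  rcases eq_or_ne v 0 with rfl | hv
  · simp
  rcases eq_or_ne t μ with rfl | ht
  · rfl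
  exact (gaussianPDFReal_lt_gaussianPDFReal_self hv ht).le

lemma continuous_gaussianPDFReal (μ : ℝ) (v : NNReal) : Continuous (gaussianPDFReal μ v) := by
  rw [gaussianPDFReal_def]
  fun_prop

lemma cdf_gaussianReal_eq_integral (μ : ℝ) {v : NNReal} (hv : v ≠ 0) (x : ℝ) :
    cdf (gaussianReal μ v) x = ∫ t in Iic x, gaussianPDFReal μ v t := by
  rw [cdf_eq_real, measureReal_def, gaussianReal_apply_eq_integral μ hv,
    ENNReal.toReal_ofReal (integral_nonneg fun t => gaussianPDFReal_nonneg μ v t)]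

lemma cdf_gaussianReal_add_sub_lt {μ : ℝ} {v : NNReal} (hv : v ≠ 0) {a : ℝ} (ha : 0 < a) :
    cdf (gaussianReal μ v) (μ + a) - cdf (gaussianReal μ v) μ < a * gaussianPDFReal μ v μ := by
  have hint {x : ℝ} := (integrable_gaussianPDFReal μ v).integrableOn (s := Iic x)
  rw [cdf_gaussianReal_eq_integral μ hv, cdf_gaussianReal_eq_integral μ hv,
    intervalIntegral.integral_Iic_sub_Iic hint hint]
  calc ∫ t in μ..μ + a, gaussianPDFReal μ v t
      < ∫ _ in μ..μ + a, gaussianPDFReal μ v μ :=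
        intervalIntegral.integral_lt_integral_of_continuousOn_of_le_of_exists_lt (by linarith)
          (continuous_gaussianPDFReal μ v).continuousOn continuousOn_const
          (fun t _ => gaussianPDFReal_le_gaussianPDFReal_self μ v t)
          ⟨μ + a, right_mem_Icc.2 (by linarith),
            gaussianPDFReal_lt_gaussianPDFReal_self hv (by linarith)⟩
    _ = a * gaussianPDFReal μ v μ := by simp

lemma stdNormCDF_neg (x : ℝ) : stdNormCDF (-x) = 1 - stdNormCDF x :=
  cdf_gaussianReal_neg one_ne_zero x

lemma stdNormCDF_zero : stdNormCDF 0 = 1 / 2 := by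
  linarith [neg_zero (G := ℝ) ▸ stdNormCDF_neg 0]

lemma stdNormCDF_lt_half_add {a : ℝ} (ha : 0 < a) : stdNormCDF a < 1 / 2 + a / √(2 * π) := by
  have h : stdNormCDF a - stdNormCDF 0 < a * gaussianPDFReal 0 1 0 := by
    have := cdf_gaussianReal_add_sub_lt (μ := 0) one_ne_zero ha
    rwa [zero_add] at this
  rw [stdNormCDF_zero, show gaussianPDFReal 0 1 0 = (√(2 * π))⁻¹ by simp [gaussianPDFReal]] at h
  rw [div_eq_mul_inv a]
  linarith

lemma two_mul_stdNormCDF_mul_lt {c u : ℝ} (hc : 0 < c) (hcπ : c ≤ √(π / 2)) (hu : 0 < u) :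
    2 * stdNormCDF (c * u) < 1 + u := by
  have hs : 0 < √(2 * π) := by positivity
  have h2c : 2 * c ≤ √(2 * π) := by
    rw [le_sqrt (by positivity) (by positivity)]
    nlinarith [sq_sqrt (div_pos pi_pos two_pos).le, sqrt_nonneg (π / 2)]
  have hbound : c * u / √(2 * π) ≤ u / 2 := by
    rw [div_le_div_iff₀ hs two_pos]
    nlinarith
  linarith [stdNormCDF_lt_half_add (mul_pos hc hu)]

lemma sqrt_one_add_div_one_sub_mem_Ioc {p ρ : ℝ} (hp : 0 < p) (h1 : -1 < ρ)
    (h2 : ρ ≤ (p - 2) / (p + 2)) : √((1 + ρ) / (1 - ρ)) ∈ Ioc 0 √(p / 2) := by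
  have hρ : ρ * (p + 2) ≤ p - 2 := (le_div_iff₀ (by linarith)).1 h2
  have hden : 0 < 1 - ρ := by nlinarith
  refine ⟨sqrt_pos.2 (div_pos (by linarith) hden), sqrt_le_sqrt ?_⟩
  rw [div_le_div_iff₀ hden two_pos]
  linarith

/-- For `−1 < ρ ≤ (π−2)/(π+2)` and `c = √((1+ρ)/(1−ρ))` (so that `0 < c ≤ √(π/2)`),
`u = 0` is the unique real solution of `1 − 2·Φ(c·u) + u = 0`. -/
theorem stmt_3 (ρ : ℝ) (h1 : -1 < ρ) (h2 : ρ ≤ (π - 2) / (π + 2))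
    (c : ℝ) (hc : c = Real.sqrt ((1 + ρ) / (1 - ρ))) :
    (0 < c ∧ c ≤ Real.sqrt (π / 2)) ∧
      ∀ u : ℝ, 1 - 2 * stdNormCDF (c * u) + u = 0 ↔ u = 0 := by
  obtain ⟨hc0, hcπ⟩ := hc ▸ sqrt_one_add_div_one_sub_mem_Ioc pi_pos h1 h2
  refine ⟨⟨hc0, hcπ⟩, fun u => ⟨fun hu => ?_, fun hu => ?_⟩⟩
  · rcases lt_trichotomy u 0 with hneg | hzero | hpos
    · have := two_mul_stdNormCDF_mul_lt hc0 hcπ (neg_pos.2 hneg)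
      rw [mul_neg, stdNormCDF_neg] at this
      linarith
    · exact hzero
    · linarith [two_mul_stdNormCDF_mul_lt hc0 hcπ hpos]
  · rw [hu, mul_zero, stdNormCDF_zero]
    norm_num
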